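/- Let F be an infinite field, n ≥ 3, and let z_1,…,z_k be variables of nonzero degrees g_1,…,g_k ∈ Z_n with g_1 + ⋯ + g_k ≤ n − 1 (as integers in {1,…,n−1}), and y_1,…,y_m degree-0 variables. For each composition (t_1,…,t_k) of m into k nonnegative parts, let c_{(t_1,…,t_k)} = [z_1, y_1,…,y_{t_1}, z_2, y_{t_1+1},…,y_{t_1+t_2}, z_3, …, z_k, y_{t_1+⋯+t_{k−1}+1},…,y_m] (left-normed). Then these multilinear commutators, over all such compositions, are linearly independent modulo the ideal of Z_n-graded identities of UT_n(F)^{(-)} with its canonical Z_n-grading: no nontrivial F-linear combination of them is a Z_n-graded identity of UT_n(F)^{(-)}. -/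

import Mathlib

open FreeLieAlgebra

/-- The free `ℤ/n`-graded Lie algebra over `F`: the free Lie algebra on countably many
variables of each homogeneous degree `g : ZMod n`; the variable `(g, i)` is the `i`-th
variable of degree `g`. -/
abbrev FreeGLie (F : Type) [Field F] (n : ℕ) := FreeLieAlgebra F (ZMod n × ℕ)

/-- Homogeneous Lie monomials (bracket words) of degree `g`. -/
inductive HomWord (F : Type) [Field F] (n : ℕ) : ZMod n → FreeGLie F n → Prop
  | of (g : ZMod n) (i : ℕ) : HomWord F n g (FreeLieAlgebra.of F (g, i))
  | bracket {g h : ZMod n} {x y : FreeGLie F n} :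
      HomWord F n g x → HomWord F n h y → HomWord F n (g + h) ⁅x, y⁆

/-- The homogeneous component of degree `g` of the free graded Lie algebra. -/
noncomputable def homComp (F : Type) [Field F] (n : ℕ) (g : ZMod n) : Submodule F (FreeGLie F n) :=
  Submodule.span F {x | HomWord F n g x}

/-- A graded substitution sends each variable of degree `g` to a homogeneous element
of degree `g`; it induces a grading-preserving endomorphism via `FreeLieAlgebra.lift`,
and every grading-preserving endomorphism arises this way. -/
def IsGradedSubst (F : Type) [Field F] (n : ℕ) (s : ZMod n × ℕ → FreeGLie F n) : Prop :=
  ∀ g i, s (g, i) ∈ homComp F n g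

/-- `S` is a `T`-ideal: the carrier of a Lie ideal of the free graded Lie algebra which is
stable under all grading-preserving endomorphisms. -/
structure IsTIdeal (F : Type) [Field F] (n : ℕ) (S : Set (FreeGLie F n)) : Prop where
  isIdeal : ∃ J : LieIdeal F (FreeGLie F n), S = ↑J
  substClosed : ∀ s, IsGradedSubst F n s → ∀ x ∈ S, FreeLieAlgebra.lift F s x ∈ S

/-- The smallest `T`-ideal containing `S`. -/
def TClosure (F : Type) [Field F] (n : ℕ) (S : Set (FreeGLie F n)) : Set (FreeGLie F n) :=
  ⋂₀ {T | IsTIdeal F n T ∧ S ⊆ T}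

/-- The degree-`g` component of the canonical `ZMod n`-grading of `UT_n(F)⁽⁻⁾`:
the span of the matrix units `e_{ij}` with `i ≤ j` and `j - i = g` in `ZMod n`. -/
def Lcomp (F : Type) [Field F] (n : ℕ) (g : ZMod n) : Submodule F (Matrix (Fin n) (Fin n) F) :=
  Submodule.span F {A | ∃ i j : Fin n, i ≤ j ∧ ((j : ℕ) : ZMod n) - ((i : ℕ) : ZMod n) = g ∧
    A = Matrix.single i j 1}

attribute [local instance 100] LieRing.ofAssociativeRing

/-- The set of `ZMod n`-graded identities of `UT_n(F)⁽⁻⁾` (with commutator bracket),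
i.e. the elements of the free graded Lie algebra vanishing under every substitution that
sends each variable of degree `g` into the component `Lcomp F n g`. -/
def gradedId (F : Type) [Field F] (n : ℕ) : Set (FreeGLie F n) :=
  {f | ∀ v : ZMod n × ℕ → Matrix (Fin n) (Fin n) F,
    (∀ g i, v (g, i) ∈ Lcomp F n g) → FreeLieAlgebra.lift F v f = 0}

/-- The left-normed bracket `[x, l₁, l₂, …]`. -/
noncomputable def lnw (F : Type) [Field F] (n : ℕ) (x : FreeGLie F n)
    (l : List (FreeGLie F n)) : FreeGLie F n :=
  l.foldl (fun a b => ⁅a, b⁆) x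

/-- The degree-0 variable `y_i`. -/
noncomputable def yv (F : Type) [Field F] (n : ℕ) (i : ℕ) : FreeGLie F n :=
  FreeLieAlgebra.of F ((0 : ZMod n), i)

/-- The variable `z_j` of nonzero degree `g j` (the `j`-th of the `k+1` fixed variables of
nonzero degree; distinct `j` give distinct variables). -/
noncomputable def zvG (F : Type) [Field F] (n k : ℕ) (g : Fin (k + 1) → ZMod n)
    (j : Fin (k + 1)) : FreeGLie F n :=
  FreeLieAlgebra.of F (g j, j.val)

/-- For a composition `t = (t₁,…,t_{k+1})` of `m`, the multilinear left-normed commutator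
`c_t = [z₁, y₁,…,y_{t₁}, z₂, y_{t₁+1},…,y_{t₁+t₂}, …, z_{k+1}, y_{t₁+⋯+t_k+1},…,y_m]`. -/
noncomputable def cComp (F : Type) [Field F] (n k : ℕ) (g : Fin (k + 1) → ZMod n)
    (t : Fin (k + 1) → ℕ) : FreeGLie F n :=
  lnw F n (zvG F n k g 0)
    ((List.finRange (k + 1)).flatMap fun s =>
      (if s = 0 then [] else [zvG F n k g s]) ++
        ((List.range (t s)).map fun r =>
          yv F n ((∑ s' ∈ Finset.univ.filter (· < s), t s') + r)))

/-!
Send `z_j` to the matrix unit `e_{i_j, i_{j+1}}`, where `i_0 < i_1 < ⋯ < i_{k+1}` are the partial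
sums of the degrees `(g j).val` (they stay below `n` because `∑ (g j).val ≤ n - 1`), and send every
`y` to one diagonal matrix `D`. Bracketing `e_{ab}` with `D` multiplies it by `D_b - D_a`, so `c_t`
evaluates to `∏ j, (D_{i_{j+1}} - D_{i_0}) ^ t j • e_{i_0, i_{k+1}}`. With `D_{i_0} = 0` and
`D_{i_{j+1}} = x_j`, a linear combination `∑ c t • c_t` that is a graded identity gives a polynomial
`∑ c t * x ^ t` vanishing on all of `F^{k+1}`; as `F` is infinite, all `c t` vanish.
-/

open Matrix

section MatrixUnits

variable {ι R : Type*} [Fintype ι] [DecidableEq ι] [CommRing R]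

lemma lie_single_diagonal (a b : ι) (r : R) (d : ι → R) :
    ⁅single a b r, diagonal d⁆ = single a b (r * (d b - d a)) := by
  ext i j
  simp only [Ring.lie_def, Matrix.sub_apply, mul_diagonal, diagonal_mul, single_apply]
  split_ifs <;> simp_all [mul_sub, mul_comm]

lemma lie_single_single_of_ne {a c : ι} (b : ι) (r : R) (hac : a ≠ c) :
    ⁅single a b r, single b c 1⁆ = single a c r := by
  rw [Ring.lie_def, single_mul_single_same, single_mul_single_of_ne _ b c a hac.symm, mul_one,
    sub_zero]

lemma foldl_lie_single_replicate_diagonal (a b : ι) (r : R) (d : ι → R) (e : ℕ) :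
    (List.replicate e (diagonal d)).foldl (⁅·, ·⁆) (single a b r) =
      single a b (r * (d b - d a) ^ e) := by
  induction e generalizing r with
  | zero => simp
  | succ e ih => rw [List.replicate_succ, List.foldl_cons, lie_single_diagonal, ih, pow_succ',
      mul_assoc]

lemma foldl_lie_single_chain {N : ℕ} (P : Fin (N + 1) → ι) (e : Fin N → ℕ) (d : ι → R) (a : ι)
    (ha : ∀ j : Fin N, P j.succ ≠ a) (r : R) :
    ((List.finRange N).flatMap fun j =>
        single (P j.castSucc) (P j.succ) 1 :: List.replicate (e j) (diagonal d)).foldl (⁅·, ·⁆)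
        (single a (P 0) r) =
      single a (P (Fin.last N)) (r * ∏ j, (d (P j.succ) - d a) ^ e j) := by
  induction N generalizing r with
  | zero => simp
  | succ N ih =>
    rw [List.finRange_succ, List.flatMap_cons, List.foldl_append, List.foldl_cons,
      Fin.castSucc_zero, lie_single_single_of_ne _ _ (ha 0).symm,
      foldl_lie_single_replicate_diagonal, List.flatMap_map]
    have := ih (fun i => P i.succ) (fun j => e j.succ) (fun j : Fin N => ha j.succ)
      (r * (d (P (0 : Fin (N + 1)).succ) - d a) ^ e 0)
    simp only [Fin.succ_castSucc, Fin.succ_last] at this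
    rw [this, Fin.prod_univ_succ, mul_assoc]

end MatrixUnits

lemma LieHom.map_foldl_lie {R L L' : Type*} [CommRing R] [LieRing L] [LieAlgebra R L] [LieRing L']
    [LieAlgebra R L'] (φ : L →ₗ⁅R⁆ L') (x : L) (l : List L) :
    φ (l.foldl (⁅·, ·⁆) x) = (l.map φ).foldl (⁅·, ·⁆) (φ x) := by
  induction l generalizing x with
  | nil => rfl
  | cons y l ih => simp only [List.foldl_cons, List.map_cons, ih, LieHom.map_lie]

lemma MvPolynomial.eq_zero_of_forall_sum_mul_prod_pow_eq_zero {R σ : Type*} [CommRing R]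
    [IsDomain R] [Infinite R] [Fintype σ] (s : Finset (σ → ℕ)) (c : (σ → ℕ) → R)
    (h : ∀ x : σ → R, ∑ t ∈ s, c t * ∏ i, x i ^ t i = 0) : ∀ t ∈ s, c t = 0 := by
  classical
  set p : MvPolynomial σ R := ∑ t ∈ s, monomial (Finsupp.equivFunOnFinite.symm t) (c t)
  have hp : p = 0 := funext fun x => by
    simp [p, eval_monomial, Finsupp.prod_fintype, h x]
  intro t ht
  simpa [p, coeff_sum, coeff_monomial, ht] using
    congr_arg (coeff (Finsupp.equivFunOnFinite.symm t)) hp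

section Chain

variable {F : Type} [Field F] {n k : ℕ} (g : Fin (k + 1) → ZMod n)

lemma partialSum_val_strictMono (hg : ∀ j, g j ≠ 0) :
    StrictMono (Fin.partialSum fun j => (g j).val) :=
  Fin.strictMono_iff_lt_succ.2 fun j => by
    rw [Fin.partialSum_succ]
    have := (ZMod.val_ne_zero (g j)).2 (hg j)
    omega

lemma partialSum_val_le_sum (i : Fin (k + 2)) :
    Fin.partialSum (fun j => (g j).val) i ≤ ∑ j, (g j).val := by
  have hmono : Monotone (Fin.partialSum fun j => (g j).val) :=
    Fin.monotone_iff_le_succ.2 fun j => by rw [Fin.partialSum_succ]; omega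
  calc Fin.partialSum (fun j => (g j).val) i ≤ Fin.partialSum (fun j => (g j).val) (Fin.last _) :=
        hmono (Fin.le_last i)
    _ = ∑ j, (g j).val := by
      rw [Fin.partialSum, Fin.val_last, List.take_of_length_le (by simp), List.sum_ofFn]

lemma diagonal_mem_Lcomp (d : Fin n → F) : diagonal d ∈ Lcomp F n 0 := by
  rw [← sum_single_eq_diagonal]
  refine Submodule.sum_mem _ fun q _ => ?_
  rw [← mul_one (d q), ← smul_eq_mul, ← smul_single]
  exact Submodule.smul_mem _ _ (Submodule.subset_span ⟨q, q, le_rfl, sub_self _, rfl⟩)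

variable [NeZero n]

def chainIdx (hsum : ∑ j, (g j).val ≤ n - 1) (i : Fin (k + 2)) : Fin n :=
  ⟨Fin.partialSum (fun j => (g j).val) i, by
    have := partialSum_val_le_sum g i
    have := NeZero.pos n
    omega⟩

variable (hsum : ∑ j, (g j).val ≤ n - 1)

lemma chainIdx_strictMono (hg : ∀ j, g j ≠ 0) : StrictMono (chainIdx g hsum) :=
  fun _ _ hij => Fin.mk_lt_mk.2 (partialSum_val_strictMono g hg hij)

lemma single_chainIdx_mem_Lcomp (j : Fin (k + 1)) :
    single (chainIdx g hsum j.castSucc) (chainIdx g hsum j.succ) (1 : F) ∈ Lcomp F n (g j) := by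
  refine Submodule.subset_span ⟨_, _, Fin.mk_le_mk.2 ?_, ?_, rfl⟩
  · rw [Fin.partialSum_succ]; omega
  · simp only [Fin.partialSum_succ, Nat.cast_add, add_sub_cancel_left,
      ZMod.natCast_zmod_val]

end Chain

section ChainSubst

variable {F : Type} [Field F] {n k : ℕ} [NeZero n] (g : Fin (k + 1) → ZMod n)
  (hsum : ∑ j, (g j).val ≤ n - 1) (d : Fin n → F)

noncomputable def chainSubst : ZMod n × ℕ → Matrix (Fin n) (Fin n) F :=
  Function.extend (fun j : Fin (k + 1) => (g j, j.val))
    (fun j => single (chainIdx g hsum j.castSucc) (chainIdx g hsum j.succ) 1)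
    fun v => if v.1 = 0 then diagonal d else 0

omit [NeZero n] in
lemma zvG_label_injective : Function.Injective fun j : Fin (k + 1) => (g j, j.val) :=
  fun _ _ h => Fin.ext (Prod.ext_iff.1 h).2

lemma chainSubst_mem_Lcomp (h : ZMod n) (i : ℕ) : chainSubst g hsum d (h, i) ∈ Lcomp F n h := by
  by_cases hz : ∃ j : Fin (k + 1), (g j, j.val) = (h, i)
  · obtain ⟨j, hj⟩ := hz
    obtain ⟨rfl, rfl⟩ := Prod.mk.inj hj
    rw [chainSubst, (zvG_label_injective g).extend_apply]
    exact single_chainIdx_mem_Lcomp g hsum j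
  · rw [chainSubst, Function.extend_apply' _ _ _ hz]
    split_ifs with h0
    · obtain rfl : h = 0 := h0
      exact diagonal_mem_Lcomp d
    · exact Submodule.zero_mem _

lemma lift_chainSubst_zvG (j : Fin (k + 1)) :
    lift F (chainSubst g hsum d) (zvG F n k g j) =
      single (chainIdx g hsum j.castSucc) (chainIdx g hsum j.succ) 1 := by
  rw [zvG, lift_of_apply, chainSubst, (zvG_label_injective g).extend_apply]

lemma lift_chainSubst_yv (hg : ∀ j, g j ≠ 0) (i : ℕ) :
    lift F (chainSubst g hsum d) (yv F n i) = diagonal d := by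
  rw [yv, lift_of_apply, chainSubst, Function.extend_apply', if_pos rfl]
  rintro ⟨j, hj⟩
  exact hg j (Prod.ext_iff.1 hj).1

lemma lift_chainSubst_cComp (hg : ∀ j, g j ≠ 0) (t : Fin (k + 1) → ℕ) :
    lift F (chainSubst g hsum d) (cComp F n k g t) =
      single (chainIdx g hsum 0) (chainIdx g hsum (Fin.last _))
        (∏ j, (d (chainIdx g hsum j.succ) - d (chainIdx g hsum 0)) ^ t j) := by
  set P := chainIdx g hsum
  have hP := chainIdx_strictMono g hsum hg
  -- `⁅e_{i₀ i₀}, e_{i₀ i₁}⁆ = e_{i₀ i₁}` makes `z₀` the first link of a uniform chain.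
  have hstart : lift F (chainSubst g hsum d) (zvG F n k g 0) =
      ⁅single (P 0) (P 0) (1 : F), lift F (chainSubst g hsum d) (zvG F n k g 0)⁆ := by
    rw [lift_chainSubst_zvG, Fin.castSucc_zero, Fin.succ_zero_eq_one,
      lie_single_single_of_ne _ _ (hP.injective.ne Fin.zero_ne_one)]
  rw [cComp, lnw, LieHom.map_foldl_lie, hstart, ← List.foldl_cons, ← one_mul (∏ j, _),
    ← foldl_lie_single_chain P t d (P 0) (fun j => hP.injective.ne (Fin.succ_ne_zero j))]
  congr 1
  simp only [List.map_flatMap, List.map_append, List.map_map, Function.comp_def,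
    lift_chainSubst_yv g hsum d hg, List.map_const', List.length_range, List.finRange_succ,
    List.flatMap_cons, List.flatMap_map, Fin.succ_ne_zero, if_true, if_false,
    List.map_cons, lift_chainSubst_zvG, List.nil_append, List.cons_append]
  rfl

end ChainSubst

theorem stmt16_general (F : Type) [Field F] [Infinite F] (n k : ℕ)
    (g : Fin (k + 1) → ZMod n) (hg : ∀ j, g j ≠ 0) (hsum : ∑ j, (g j).val ≤ n - 1)
    (s : Finset (Fin (k + 1) → ℕ))
    (c : (Fin (k + 1) → ℕ) → F)
    (h : (∑ t ∈ s, c t • cComp F n k g t) ∈ gradedId F n) :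
    ∀ t ∈ s, c t = 0 := by
  have : NeZero n := ⟨fun hn => by
    subst hn
    have := Finset.single_le_sum (fun j _ => Nat.zero_le (g j).val) (Finset.mem_univ 0)
    have := (ZMod.val_ne_zero (g 0)).2 (hg 0)
    omega⟩
  refine MvPolynomial.eq_zero_of_forall_sum_mul_prod_pow_eq_zero s c fun x => ?_
  obtain ⟨d, hd⟩ :
      ∃ d : Fin n → F, ∀ i, d (chainIdx g hsum i) = (Fin.cons 0 x : Fin (k + 2) → F) i :=
    ⟨_, (chainIdx_strictMono g hsum hg).injective.extend_apply _ 0⟩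
  have hv := h (chainSubst g hsum d) (chainSubst_mem_Lcomp g hsum d)
  simp only [map_sum, map_smul, lift_chainSubst_cComp g hsum d hg, hd, Fin.cons_zero,
    Fin.cons_succ, sub_zero, smul_single, smul_eq_mul] at hv
  simpa [Matrix.sum_apply] using
    congr_fun₂ hv (chainIdx g hsum 0) (chainIdx g hsum (Fin.last _))

/-- Let `n ≥ 3` and `z₁,…,z_{k+1}` have nonzero degrees `g₁,…,g_{k+1}`
with `g₁ + ⋯ + g_{k+1} ≤ n - 1` (as integers in `{1,…,n-1}`). The multilinear commutators
`c_t`, over all compositions `t` of `m` into `k+1` nonnegative parts, are linearly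
independent modulo the ideal of `ZMod n`-graded identities of `UT_n(F)⁽⁻⁾`: no nontrivial
`F`-linear combination of them is a graded identity of `UT_n(F)⁽⁻⁾`. -/
theorem stmt16 (F : Type) [Field F] [Infinite F] (n k m : ℕ) (hn : 3 ≤ n)
    (g : Fin (k + 1) → ZMod n) (hg : ∀ j, g j ≠ 0) (hsum : ∑ j, (g j).val ≤ n - 1)
    (s : Finset (Fin (k + 1) → ℕ)) (hs : ∀ t ∈ s, ∑ j, t j = m)
    (c : (Fin (k + 1) → ℕ) → F)
    (h : (∑ t ∈ s, c t • cComp F n k g t) ∈ gradedId F n) :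
    ∀ t ∈ s, c t = 0 :=
  stmt16_general F n k g hg hsum s c h
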